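/- Let q = 2^r with r a positive integer and let β ∈ 𝔽_q. Then the number of w ∈ O⁺(2,q) with matrix trace Tr w = β equals q if β = 0; equals 2 if β ≠ 0 and tr(β^{−1}) = 0; and equals 0 if β ≠ 0 and tr(β^{−1}) = 1. -/

import Mathlib

/-!
An isometry of the hyperbolic plane `x₁x₂` fixes or swaps the two isotropic lines, so `O⁺(2,q)`
consists of the matrices `diag(a, a⁻¹)` and `antidiag(b, b⁻¹)` with `a, b ≠ 0`, of traces
`a + a⁻¹` and `0`. In characteristic 2, `a + a⁻¹ = 0` forces `a = 1`, giving `(q - 1) + 1`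
elements of trace `0`. For `β ≠ 0` the substitution `a = βt` turns `a + a⁻¹ = β` into the
Artin–Schreier equation `t² + t = β⁻²`. The map `t ↦ t² + t` is additive and two-to-one, so its
image has `q/2` elements; it lies in `ker tr` because `tr(t²) = tr(t)`, and `ker tr` has at most
`q/2` elements because the trace is not identically zero. Hence `t² + t = c` has two solutions
when `tr c = 0` and none otherwise, and `tr(β⁻²) = tr(β⁻¹)`.
-/

open Finset Matrix

/-- The quadratic form `θ⁺(x) = ∑ i, x_i x_{n+i}` on `F^{2n}` (columns indexed by `Fin n ⊕ Fin n`). -/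
def thetaPlus (F : Type) [Field F] (n : ℕ) (x : Fin n ⊕ Fin n → F) : F :=
  ∑ i : Fin n, x (Sum.inl i) * x (Sum.inr i)

/-- The orthogonal group `O⁺(2n,q)`: invertible matrices preserving `θ⁺`. -/
noncomputable def OplusGrp (F : Type) [Field F] [Fintype F] [DecidableEq F] (n : ℕ) :
    Finset (Matrix (Fin n ⊕ Fin n) (Fin n ⊕ Fin n) F) := by
  classical
  exact Finset.univ.filter (fun w => IsUnit w ∧
    ∀ x : Fin n ⊕ Fin n → F, thetaPlus F n (w.mulVec x) = thetaPlus F n x)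

/-- `SO⁺(2n,q)`: the kernel of `δ⁺(w) = Tr(B ᵗC)` on `O⁺(2n,q)`,
where `w = [[A,B],[C,D]]` in `n × n` blocks. -/
noncomputable def SOplusGrp (F : Type) [Field F] [Fintype F] [DecidableEq F] (n : ℕ) :
    Finset (Matrix (Fin n ⊕ Fin n) (Fin n ⊕ Fin n) F) := by
  classical
  exact (OplusGrp F n).filter
    (fun w => Matrix.trace (Matrix.toBlocks₁₂ w * (Matrix.toBlocks₂₁ w)ᵀ) = 0)

/-- The trace map `tr(x) = x + x² + ⋯ + x^{2^{r−1}}`, valued in `𝔽₂ = {0,1} ⊆ F`. -/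
def trF (F : Type) [Field F] (r : ℕ) (x : F) : F := ∑ i ∈ Finset.range r, x ^ 2 ^ i

/-- The canonical additive character `λ(x) = (−1)^{tr(x)} ∈ {±1} ⊆ ℤ`. -/
noncomputable def lam (F : Type) [Field F] (r : ℕ) (x : F) : ℤ := by
  classical exact if trF F r x = 0 then 1 else -1

/-- The trace map `tr` viewed as a function into `𝔽₂ = ZMod 2`. -/
noncomputable def tr2 (F : Type) [Field F] (r : ℕ) (x : F) : ZMod 2 := by
  classical exact if trF F r x = 0 then 0 else 1

/-- The Kloosterman sum `K(λ;a) = ∑_{α ∈ F*} λ(α + aα⁻¹)`. -/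
noncomputable def Kl (F : Type) [Field F] [Fintype F] (r : ℕ) (a : F) : ℤ := by
  classical
  exact ∑ α ∈ Finset.univ.filter (fun α : F => α ≠ 0), lam F r (α + a * α⁻¹)

/-- The `m`-dimensional Kloosterman sum
`K_m(λ;a) = ∑_{α₁,…,α_m ∈ F*} λ(α₁ + ⋯ + α_m + aα₁⁻¹⋯α_m⁻¹)`;
for `m = 0` this is `K₀(λ;a) = λ(a)`. -/
noncomputable def Klm (F : Type) [Field F] [Fintype F] (r m : ℕ) (a : F) : ℤ := by
  classical
  exact ∑ v ∈ Finset.univ.filter (fun v : Fin m → F => ∀ i, v i ≠ 0),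
    lam F r ((∑ i, v i) + a * (∏ i, v i)⁻¹)

/-- The power moment `MK^h = ∑_{a ∈ F*} K(λ;a)^h`. -/
noncomputable def MK (F : Type) [Field F] [Fintype F] (r h : ℕ) : ℤ := by
  classical exact ∑ a ∈ Finset.univ.filter (fun a : F => a ≠ 0), (Kl F r a) ^ h

/-- The power moment `MK₂^h = ∑_{a ∈ F*} K₂(λ;a)^h` of 2-dimensional Kloosterman sums. -/
noncomputable def MK2 (F : Type) [Field F] [Fintype F] (r h : ℕ) : ℤ := by
  classical exact ∑ a ∈ Finset.univ.filter (fun a : F => a ≠ 0), (Klm F r 2 a) ^ h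

/-- The binary code `C(G) = {u ∈ 𝔽₂^G : ∑_{g ∈ G} u_g Tr(g) = 0 in F}`. -/
noncomputable def code (F : Type) [Field F] [Fintype F] [DecidableEq F]
    {ι : Type} [Fintype ι] [DecidableEq ι] (G : Finset (Matrix ι ι F)) :
    Finset (↥G → ZMod 2) := by
  classical
  exact Finset.univ.filter
    (fun u => ∑ g : ↥G, (u g).val • Matrix.trace (g : Matrix ι ι F) = 0)

/-- Number of codewords of Hamming weight `j` in the code `C(G)`. -/
noncomputable def wtCount (F : Type) [Field F] [Fintype F] [DecidableEq F]
    {ι : Type} [Fintype ι] [DecidableEq ι] (G : Finset (Matrix ι ι F)) (j : ℕ) : ℕ := by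
  classical
  exact ((code F G).filter
    (fun u => (Finset.univ.filter (fun g : ↥G => u g = 1)).card = j)).card

/-- `t! · S(h,t)` where `S(h,t)` is the Stirling number of the second kind,
`S(h,t) = (1/t!) ∑_{j=0}^{t} (−1)^{t−j} C(t,j) j^h`. -/
def tS (h t : ℕ) : ℤ :=
  ∑ j ∈ Finset.range (t + 1), (-1 : ℤ) ^ (t - j) * (t.choose j : ℤ) * (j : ℤ) ^ h

/-- Binomial coefficient with integer arguments: `0` whenever `k < 0` or `k > n`. -/
def ichoose (n k : ℤ) : ℤ := if 0 ≤ k ∧ k ≤ n then (n.toNat.choose k.toNat : ℤ) else 0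

section Trace

variable {F : Type} [Field F] {r : ℕ}

lemma trF_add [CharP F 2] (x y : F) : trF F r (x + y) = trF F r x + trF F r y := by
  simp only [trF, ← Finset.sum_add_distrib, add_pow_char_pow]

variable [Fintype F]

lemma charP_two_of_card_eq_two_pow (hF : Fintype.card F = 2 ^ r) : CharP F 2 := by
  have hr : r ≠ 0 := by
    rintro rfl
    exact (Fintype.one_lt_card (α := F)).ne' hF
  have h2 : ringChar F = 2 := by
    rw [FiniteField.even_card_iff_char_two, hF, Nat.pow_mod, Nat.mod_self, zero_pow hr,
      Nat.zero_mod]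
  exact ringChar.of_eq h2

lemma trF_sq (hF : Fintype.card F = 2 ^ r) (x : F) : trF F r (x ^ 2) = trF F r x := by
  have hfrob : x ^ 2 ^ r = x := by rw [← hF, FiniteField.pow_card]
  have h := Finset.sum_range_succ' (fun i => x ^ 2 ^ i) r
  rw [Finset.sum_range_succ, hfrob, pow_zero, pow_one, add_left_inj] at h
  simp only [trF, ← pow_mul, ← pow_succ']
  exact h.symm

lemma exists_trF_ne_zero [CharP F 2] (hF : Fintype.card F = 2 ^ r) :
    ∃ y : F, trF F r y ≠ 0 := by
  let := ZMod.algebra F 2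
  have hrank : Module.finrank (ZMod 2) F = r := by
    have h := Module.card_eq_pow_finrank (K := ZMod 2) (V := F)
    rw [hF, ZMod.card] at h
    exact (Nat.pow_right_injective le_rfl h).symm
  obtain ⟨y, hy⟩ := Algebra.trace_surjective (ZMod 2) F 1
  have h := FiniteField.algebraMap_trace_eq_sum_pow (ZMod 2) F y
  rw [hy, map_one, hrank, Nat.card_zmod] at h
  exact ⟨y, by rw [trF, ← h]; exact one_ne_zero⟩

end Trace

section ArtinSchreier

variable {F : Type} [Field F] [CharP F 2]

lemma sq_add_self_eq_iff {s t : F} : s ^ 2 + s = t ^ 2 + t ↔ s = t ∨ s = t + 1 := by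
  have h2 : (2 : F) = 0 := CharTwo.two_eq_zero
  have key : s ^ 2 + s - (t ^ 2 + t) = (s - t) * (s - (t + 1)) := by
    linear_combination (s - t ^ 2 + s * t - t) * h2
  rw [← sub_eq_zero, key, mul_eq_zero, sub_eq_zero, sub_eq_zero]

variable [Fintype F] [DecidableEq F] {r : ℕ}

lemma card_filter_sq_add_self_eq_sq_add_self (t₀ : F) :
    #{t | t ^ 2 + t = t₀ ^ 2 + t₀} = 2 := by
  have h : ({t | t ^ 2 + t = t₀ ^ 2 + t₀} : Finset F) = {t₀, t₀ + 1} := by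
    ext t
    simp only [mem_filter, mem_univ, true_and, mem_insert, mem_singleton, sq_add_self_eq_iff]
  rw [h, card_pair]
  simp

lemma image_sq_add_self_eq_filter_trF (hF : Fintype.card F = 2 ^ r) :
    univ.image (fun t : F => t ^ 2 + t) = ({c | trF F r c = 0} : Finset F) := by
  set T := univ.image (fun t : F => t ^ 2 + t)
  set K : Finset F := {c | trF F r c = 0}
  have hTK : T ⊆ K := by
    simp only [T, K, subset_iff, mem_image, mem_univ, true_and, mem_filter]
    rintro _ ⟨t, rfl⟩
    rw [trF_add, trF_sq hF, CharTwo.add_self_eq_zero]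
  have hT : Fintype.card F = 2 * #T := by
    rw [← card_univ, card_eq_sum_card_image (fun t : F => t ^ 2 + t) univ,
      sum_congr rfl fun c hc => ?_, sum_const, smul_eq_mul, mul_comm]
    obtain ⟨t₀, -, rfl⟩ := mem_image.mp hc
    exact card_filter_sq_add_self_eq_sq_add_self t₀
  -- translating by an element of nonzero trace maps `K` into its complement
  have hK : #K ≤ #{c | ¬trF F r c = 0} := by
    obtain ⟨y, hy⟩ := exists_trF_ne_zero hF
    refine card_le_card_of_injOn (· + y) (fun c hc => ?_) (fun a _ b _ hab => add_right_cancel hab)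
    simp only [K, coe_filter, Set.mem_ofPred_eq, mem_univ, true_and] at hc ⊢
    rwa [trF_add, hc, zero_add]
  have hsplit : #K + #{c | ¬trF F r c = 0} = Fintype.card F :=
    card_filter_add_card_filter_not _
  exact eq_of_subset_of_card_le hTK (by omega)

lemma card_filter_sq_add_self_eq (hF : Fintype.card F = 2 ^ r) (c : F) :
    #{t | t ^ 2 + t = c} = if trF F r c = 0 then 2 else 0 := by
  have hc : c ∈ univ.image (fun t : F => t ^ 2 + t) ↔ trF F r c = 0 := by
    rw [image_sq_add_self_eq_filter_trF hF, mem_filter, and_iff_right (mem_univ c)]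
  split_ifs with h
  · obtain ⟨t₀, -, rfl⟩ := mem_image.mp (hc.mpr h)
    exact card_filter_sq_add_self_eq_sq_add_self t₀
  · rw [card_eq_zero, filter_eq_empty_iff]
    exact fun t _ ht => h (hc.mp (mem_image.mpr ⟨t, mem_univ t, ht⟩))

end ArtinSchreier

section TwoByTwo

variable {R : Type*}

def mat2 (a b c d : R) : Matrix (Fin 1 ⊕ Fin 1) (Fin 1 ⊕ Fin 1) R :=
  fromBlocks (of fun _ _ => a) (of fun _ _ => b) (of fun _ _ => c) (of fun _ _ => d)

lemma eq_mat2 (w : Matrix (Fin 1 ⊕ Fin 1) (Fin 1 ⊕ Fin 1) R) :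
    w = mat2 (w (.inl 0) (.inl 0)) (w (.inl 0) (.inr 0)) (w (.inr 0) (.inl 0))
      (w (.inr 0) (.inr 0)) := by
  ext (i | i) (j | j) <;> simp [mat2, Fin.fin_one_eq_zero]

lemma mat2_inj {a b c d a' b' c' d' : R} :
    mat2 a b c d = mat2 a' b' c' d' ↔ a = a' ∧ b = b' ∧ c = c' ∧ d = d' := by
  simp [mat2, ← Matrix.ext_iff, Fin.forall_fin_one, and_assoc]

variable [CommRing R]

lemma mat2_mul (a b c d a' b' c' d' : R) :
    mat2 a b c d * mat2 a' b' c' d' =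
      mat2 (a * a' + b * c') (a * b' + b * d') (c * a' + d * c') (c * b' + d * d') := by
  ext (i | i) (j | j) <;> simp [mat2, Matrix.mul_apply]

lemma mat2_one_zero_zero_one : mat2 (1 : R) 0 0 1 = 1 := by
  rw [eq_mat2 (1 : Matrix _ _ R)]
  simp

lemma trace_mat2 (a b c d : R) : trace (mat2 a b c d) = a + d := by
  simp [mat2, trace]

end TwoByTwo

section OrthogonalTwo

variable {F : Type} [Field F]

lemma thetaPlus_one (x : Fin 1 ⊕ Fin 1 → F) : thetaPlus F 1 x = x (.inl 0) * x (.inr 0) := by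
  simp [thetaPlus]

lemma thetaPlus_mat2_mulVec (a b c d : F) (x : Fin 1 ⊕ Fin 1 → F) :
    thetaPlus F 1 (mat2 a b c d *ᵥ x) =
      (a * x (.inl 0) + b * x (.inr 0)) * (c * x (.inl 0) + d * x (.inr 0)) := by
  simp [thetaPlus_one, mat2, mulVec, dotProduct]

lemma mat2_preserves_thetaPlus_iff {a b c d : F} :
    (∀ x, thetaPlus F 1 (mat2 a b c d *ᵥ x) = thetaPlus F 1 x) ↔
      a * c = 0 ∧ b * d = 0 ∧ a * d + b * c = 1 := by
  simp only [thetaPlus_mat2_mulVec]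
  simp only [thetaPlus_one]
  constructor
  · intro h
    have h₁ := h (Sum.elim 1 0)
    have h₂ := h (Sum.elim 0 1)
    have h₁₂ := h 1
    simp only [Sum.elim_inl, Sum.elim_inr, Pi.one_apply, Pi.zero_apply, mul_one, mul_zero,
      add_zero, zero_add] at h₁ h₂ h₁₂
    exact ⟨h₁, h₂, by linear_combination h₁₂ - h₁ - h₂⟩
  · rintro ⟨hac, hbd, had⟩ x
    linear_combination x (.inl 0) ^ 2 * hac + x (.inr 0) ^ 2 * hbd + x (.inl 0) * x (.inr 0) * had

lemma isUnit_mat2 {a b c d : F} (hac : a * c = 0) (hbd : b * d = 0) (had : a * d + b * c = 1) :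
    IsUnit (mat2 a b c d) := by
  have h : mat2 d b c a * mat2 a b c d = 1 := by
    rw [mat2_mul, ← mat2_one_zero_zero_one, mat2_inj]
    exact ⟨by linear_combination had, by linear_combination 2 * hbd,
      by linear_combination 2 * hac, by linear_combination had⟩
  exact ⟨⟨_, _, mul_eq_one_comm.mp h, h⟩, rfl⟩

variable [Fintype F] [DecidableEq F]

lemma mat2_mem_OplusGrp_one_iff {a b c d : F} :
    mat2 a b c d ∈ OplusGrp F 1 ↔ a * c = 0 ∧ b * d = 0 ∧ a * d + b * c = 1 := by
  rw [OplusGrp, mem_filter, mat2_preserves_thetaPlus_iff]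
  exact ⟨fun h => h.2.2, fun h => ⟨mem_univ _, isUnit_mat2 h.1 h.2.1 h.2.2, h⟩⟩

lemma OplusGrp_one_eq :
    OplusGrp F 1 = ({a | a ≠ 0} : Finset F).image (fun a => mat2 a 0 0 a⁻¹) ∪
      ({b | b ≠ 0} : Finset F).image (fun b => mat2 0 b b⁻¹ 0) := by
  ext w
  obtain ⟨a, b, c, d, rfl⟩ : ∃ a b c d : F, w = mat2 a b c d := ⟨_, _, _, _, eq_mat2 w⟩
  simp only [mat2_mem_OplusGrp_one_iff, mem_union, mem_image, mem_filter, mem_univ, true_and,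
    mat2_inj]
  constructor
  · rintro ⟨hac, hbd, had⟩
    by_cases ha : a = 0
    · subst ha
      have hb : b ≠ 0 := left_ne_zero_of_mul_eq_one (b := c) (by linear_combination had)
      have hd : d = 0 := (mul_eq_zero.mp hbd).resolve_left hb
      have hc : c = b⁻¹ := eq_inv_of_mul_eq_one_right (by linear_combination had)
      exact .inr ⟨b, hb, rfl, rfl, hc.symm, hd.symm⟩
    · have hc : c = 0 := (mul_eq_zero.mp hac).resolve_left ha
      have hd : d = a⁻¹ := eq_inv_of_mul_eq_one_right (by linear_combination had - b * hc)
      have hb : b = 0 := (mul_eq_zero.mp hbd).resolve_right (hd ▸ inv_ne_zero ha)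
      exact .inl ⟨a, ha, rfl, hb.symm, hc.symm, hd.symm⟩
  · rintro (⟨a, ha, rfl, rfl, rfl, rfl⟩ | ⟨b, hb, rfl, rfl, rfl, rfl⟩)
    · simp [ha]
    · simp [hb]

lemma card_filter_trace_OplusGrp_one (β : F) :
    #{w ∈ OplusGrp F 1 | trace w = β} =
      #{a : F | a ≠ 0 ∧ a + a⁻¹ = β} + if β = 0 then Fintype.card F - 1 else 0 := by
  have hdisj : Disjoint (({a | a ≠ 0} : Finset F).image (fun a => mat2 a 0 0 a⁻¹))
      (({b | b ≠ 0} : Finset F).image (fun b => mat2 0 b b⁻¹ 0)) := by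
    simp only [disjoint_left, mem_image, mem_filter, mem_univ, true_and, not_exists, not_and]
    rintro _ ⟨a, ha, rfl⟩ b - h
    exact ha (mat2_inj.mp h).1.symm
  rw [OplusGrp_one_eq, filter_union, card_union_of_disjoint (disjoint_filter_filter hdisj),
    filter_image, filter_image, card_image_of_injective _ fun a a' h => (mat2_inj.mp h).1,
    card_image_of_injective _ fun b b' h => (mat2_inj.mp h).2.1, filter_filter, filter_filter]
  simp only [trace_mat2, add_zero]
  split_ifs with hβ
  · simp [hβ, filter_ne', card_erase_of_mem]
  · simp [Ne.symm hβ]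

end OrthogonalTwo

section CharTwoCount

variable {F : Type} [Field F] [Fintype F] [DecidableEq F] [CharP F 2] {r : ℕ}

lemma card_filter_add_inv_eq_zero : #{a : F | a ≠ 0 ∧ a + a⁻¹ = 0} = 1 := by
  rw [card_eq_one]
  have h2 : (2 : F) = 0 := CharTwo.two_eq_zero
  refine ⟨1, ext fun a => ?_⟩
  simp only [mem_filter, mem_univ, true_and, mem_singleton]
  constructor
  · rintro ⟨ha, h⟩
    have hsq : (a + 1) ^ 2 = 0 := by
      field_simp at h
      linear_combination h + a * h2
    linear_combination (pow_eq_zero_iff two_ne_zero).mp hsq - h2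
  · rintro rfl
    simp [CharTwo.add_self_eq_zero]

lemma card_filter_add_inv_eq (hF : Fintype.card F = 2 ^ r) {β : F} (hβ : β ≠ 0) :
    #{a : F | a ≠ 0 ∧ a + a⁻¹ = β} = if trF F r β⁻¹ = 0 then 2 else 0 := by
  have h2 : (2 : F) = 0 := CharTwo.two_eq_zero
  have hsubst : ({a : F | a ≠ 0 ∧ a + a⁻¹ = β} : Finset F) =
      ({t | t ^ 2 + t = β⁻¹ ^ 2} : Finset F).image (β * ·) := by
    ext a
    simp only [mem_filter, mem_univ, true_and, mem_image]
    constructor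
    · rintro ⟨ha, h⟩
      refine ⟨β⁻¹ * a, ?_, by field_simp⟩
      field_simp at h ⊢
      linear_combination h + (a * β - 1) * h2
    · rintro ⟨t, ht, rfl⟩
      have ht0 : t ≠ 0 := by
        rintro rfl
        rw [zero_pow two_ne_zero, zero_add, eq_comm, pow_eq_zero_iff two_ne_zero, inv_eq_zero] at ht
        exact hβ ht
      refine ⟨mul_ne_zero hβ ht0, ?_⟩
      field_simp at ht ⊢
      linear_combination ht + (1 - t * β ^ 2) * h2
  rw [hsubst, card_image_of_injective _ (mul_right_injective₀ hβ), card_filter_sq_add_self_eq hF,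
    trF_sq hF]

end CharTwoCount

theorem stmt11_general (r : ℕ) (F : Type) [Field F] [Fintype F] [DecidableEq F]
    (hF : Fintype.card F = 2 ^ r) (β : F) :
    (β = 0 → ((OplusGrp F 1).filter (fun w => Matrix.trace w = β)).card = 2 ^ r) ∧
    (β ≠ 0 → trF F r β⁻¹ = 0 →
      ((OplusGrp F 1).filter (fun w => Matrix.trace w = β)).card = 2) ∧
    (β ≠ 0 → trF F r β⁻¹ = 1 →
      ((OplusGrp F 1).filter (fun w => Matrix.trace w = β)).card = 0) := by
  have := charP_two_of_card_eq_two_pow hF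
  refine ⟨fun hβ => ?_, fun hβ htr => ?_, fun hβ htr => ?_⟩ <;>
    rw [card_filter_trace_OplusGrp_one]
  · rw [if_pos hβ, hβ, card_filter_add_inv_eq_zero, hF]
    have := Nat.one_le_two_pow (n := r)
    omega
  · rw [if_neg hβ, card_filter_add_inv_eq hF hβ, if_pos htr]
  · rw [if_neg hβ, card_filter_add_inv_eq hF hβ, if_neg (by rw [htr]; exact one_ne_zero)]

theorem stmt11 (r : ℕ) (hr : 1 ≤ r) (F : Type) [Field F] [Fintype F] [DecidableEq F]
    (hF : Fintype.card F = 2 ^ r) (β : F) :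
    (β = 0 → ((OplusGrp F 1).filter (fun w => Matrix.trace w = β)).card = 2 ^ r) ∧
    (β ≠ 0 → trF F r β⁻¹ = 0 →
      ((OplusGrp F 1).filter (fun w => Matrix.trace w = β)).card = 2) ∧
    (β ≠ 0 → trF F r β⁻¹ = 1 →
      ((OplusGrp F 1).filter (fun w => Matrix.trace w = β)).card = 0) :=
  stmt11_general r F hF β
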